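/- Let s_1 ≤ s_2 ≤ ... ≤ s_n be positive reals and let f map each index to a representative value such that f(i) ≥ s_i (no compression). For a partition of {1,...,n} into blocks where each block's cost is (size of block) × (max of s over the block), there exists a monotone (contiguous, order-respecting) partition with the same block sizes whose total cost is at most the cost of the original partition. -/

import Mathlib

/-!
Order the blocks of `P` by their largest index and replace each block `B` by the interval
of length `#B` ending at `rank B`, the total size of the blocks whose largest index is at most
that of `B`. These intervals tile `Fin n` in the same order. All blocks counted in `rank B`
lie below the largest index of `B`, so `rank B` exceeds that index by at most one: the interval
of `B` lies below its largest index and, `s` being monotone, costs no more than `B`.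
-/

open scoped NNReal
open Finset

lemma Fin.card_filter_val_mem_Ico {n a b : ℕ} (hb : b ≤ n) :
    #{i : Fin n | a ≤ (i : ℕ) ∧ (i : ℕ) < b} = b - a := by
  rw [← card_map Fin.valEmbedding, ← Nat.card_Ico]
  congr 1
  ext m
  simp only [mem_map, mem_filter, mem_univ, true_and, Fin.valEmbedding_apply, mem_Ico]
  constructor
  · rintro ⟨i, hi, rfl⟩
    exact hi
  · intro hm
    exact ⟨⟨m, by omega⟩, hm, rfl⟩

lemma Finset.sup_le_sup_of_forall_exists_le {α β : Type*} [Preorder α] [SemilatticeSup β]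
    [OrderBot β] {f : α → β} (hf : Monotone f) {A B : Finset α}
    (h : ∀ i ∈ A, ∃ j ∈ B, i ≤ j) : A.sup f ≤ B.sup f :=
  Finset.sup_le fun i hi =>
    let ⟨_, hj, hij⟩ := h i hi
    (hf hij).trans (le_sup hj)

section Tiling

variable {α : Type*} [Fintype α] [DecidableEq α] {P : Finset (Finset α)}

lemma Finset.sum_card_eq_of_pairwiseDisjoint_of_cover
    (hdisj : (P : Set (Finset α)).PairwiseDisjoint id) (hcover : ∀ i, ∃ B ∈ P, i ∈ B) :
    ∑ B ∈ P, #B = Fintype.card α := by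
  calc ∑ B ∈ P, #B = #(P.biUnion id) := (card_biUnion hdisj).symm
    _ = Fintype.card α := by
      rw [show P.biUnion id = univ from eq_univ_of_forall fun i => mem_biUnion.2 (hcover i),
        card_univ]

lemma Finset.exists_mem_of_pairwiseDisjoint_of_sum_card
    (hdisj : (P : Set (Finset α)).PairwiseDisjoint id) (hsum : ∑ B ∈ P, #B = Fintype.card α)
    (i : α) : ∃ B ∈ P, i ∈ B := by
  have : P.biUnion id = univ := eq_univ_of_card _ ((card_biUnion hdisj).trans hsum)
  exact mem_biUnion.1 (this ▸ mem_univ i)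

end Tiling

namespace MonotonePartition

variable {n : ℕ}

def maxIndex (B : Finset (Fin n)) : ℕ := B.sup Fin.val

lemma le_maxIndex {B : Finset (Fin n)} {i : Fin n} (hi : i ∈ B) : (i : ℕ) ≤ maxIndex B :=
  le_sup (f := Fin.val) hi

lemma exists_mem_val_eq_maxIndex {B : Finset (Fin n)} (hB : B.Nonempty) :
    ∃ i ∈ B, (i : ℕ) = maxIndex B := by
  obtain ⟨i, hi, h⟩ := exists_mem_eq_sup B hB Fin.val
  exact ⟨i, hi, h.symm⟩

lemma maxIndex_lt {B : Finset (Fin n)} (hB : B.Nonempty) : maxIndex B < n := by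
  obtain ⟨i, -, h⟩ := exists_mem_val_eq_maxIndex hB
  exact h ▸ i.isLt

variable (P : Finset (Finset (Fin n)))

def rank (B : Finset (Fin n)) : ℕ := ∑ C ∈ P with maxIndex C ≤ maxIndex B, #C

def block (B : Finset (Fin n)) : Finset (Fin n) :=
  {i | rank P B - #B ≤ (i : ℕ) ∧ (i : ℕ) < rank P B}

variable {P}

lemma mem_block {B : Finset (Fin n)} {i : Fin n} :
    i ∈ block P B ↔ rank P B - #B ≤ (i : ℕ) ∧ (i : ℕ) < rank P B := by
  simp [block]

lemma card_le_rank {B : Finset (Fin n)} (hB : B ∈ P) : #B ≤ rank P B :=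
  single_le_sum (f := card) (fun _ _ => Nat.zero_le _) (mem_filter.2 ⟨hB, le_rfl⟩)

lemma rank_add_card_le_rank {B B' : Finset (Fin n)} (hB' : B' ∈ P)
    (h : maxIndex B < maxIndex B') :
    rank P B + #B' ≤ rank P B' := by
  have hnotin : B' ∉ P.filter (maxIndex · ≤ maxIndex B) := fun hmem =>
    (mem_filter.1 hmem).2.not_gt h
  calc rank P B + #B' = ∑ C ∈ insert B' (P.filter (maxIndex · ≤ maxIndex B)), #C := by
        rw [sum_insert hnotin, add_comm]; rfl
    _ ≤ rank P B' := sum_le_sum_of_subset fun C hC => by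
        rcases mem_insert.1 hC with rfl | hC
        · exact mem_filter.2 ⟨hB', le_rfl⟩
        · exact mem_filter.2 ⟨(mem_filter.1 hC).1, (mem_filter.1 hC).2.trans h.le⟩

section Disjoint

variable (hPdisj : (P : Set (Finset (Fin n))).PairwiseDisjoint id)
include hPdisj

lemma rank_le_maxIndex_add_one (B : Finset (Fin n)) : rank P B ≤ maxIndex B + 1 := by
  set L := P.filter (maxIndex · ≤ maxIndex B)
  have hdisj : (L : Set (Finset (Fin n))).PairwiseDisjoint id :=
    hPdisj.subset (coe_subset.2 (filter_subset _ _))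
  have hmaps : ∀ i ∈ L.biUnion id, (i : ℕ) ∈ range (maxIndex B + 1) := fun i hi => by
    obtain ⟨C, hC, hiC⟩ := mem_biUnion.1 hi
    exact mem_range.2 (Nat.lt_succ_of_le ((le_maxIndex hiC).trans (mem_filter.1 hC).2))
  calc rank P B = #(L.biUnion id) := (card_biUnion hdisj).symm
    _ ≤ #(range (maxIndex B + 1)) := card_le_card_of_injOn Fin.val hmaps Fin.val_injective.injOn
    _ = maxIndex B + 1 := card_range _

lemma rank_le {B : Finset (Fin n)} (hB : B.Nonempty) : rank P B ≤ n :=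
  (rank_le_maxIndex_add_one hPdisj B).trans (maxIndex_lt hB)

lemma card_block {B : Finset (Fin n)} (hB : B ∈ P) (hBne : B.Nonempty) : #(block P B) = #B := by
  have := card_le_rank hB
  rw [block, Fin.card_filter_val_mem_Ico (rank_le hPdisj hBne)]
  omega

lemma sup_block_le {β : Type*} [SemilatticeSup β] [OrderBot β] {s : Fin n → β}
    (hs : Monotone s) {B : Finset (Fin n)} (hB : B.Nonempty) :
    (block P B).sup s ≤ B.sup s := by
  obtain ⟨w, hw, hwmax⟩ := exists_mem_val_eq_maxIndex hB
  refine sup_le_sup_of_forall_exists_le hs fun i hi => ⟨w, hw, ?_⟩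
  have := (mem_block.1 hi).2
  have := rank_le_maxIndex_add_one hPdisj B
  rw [Fin.le_def]
  omega

variable (hPne : ∀ B ∈ P, B.Nonempty)
include hPne

lemma maxIndex_injOn : Set.InjOn maxIndex (P : Set (Finset (Fin n))) := by
  intro B hB B' hB' h
  by_contra hne
  obtain ⟨i, hi, himax⟩ := exists_mem_val_eq_maxIndex (hPne B hB)
  obtain ⟨i', hi', hi'max⟩ := exists_mem_val_eq_maxIndex (hPne B' hB')
  have : i = i' := Fin.ext (himax.trans (h.trans hi'max.symm))
  exact disjoint_left.1 (hPdisj hB hB' hne) hi (this ▸ hi')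

lemma disjoint_block {B B' : Finset (Fin n)} (hB : B ∈ P) (hB' : B' ∈ P) (hne : B ≠ B') :
    Disjoint (block P B) (block P B') := by
  have hmax : maxIndex B ≠ maxIndex B' := fun h => hne (maxIndex_injOn hPdisj hPne hB hB' h)
  rw [disjoint_left]
  intro i hi hi'
  rw [mem_block] at hi hi'
  rcases hmax.lt_or_gt with h | h
  · have := rank_add_card_le_rank (P := P) hB' h
    have := card_le_rank hB'
    omega
  · have := rank_add_card_le_rank (P := P) hB h
    have := card_le_rank hB
    omega

lemma block_nonempty {B : Finset (Fin n)} (hB : B ∈ P) : (block P B).Nonempty := by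
  rw [← card_pos, card_block hPdisj hB (hPne B hB), card_pos]
  exact hPne B hB

lemma block_injOn : Set.InjOn (block P) (P : Set (Finset (Fin n))) := by
  intro B hB B' hB' h
  by_contra hne
  obtain ⟨i, hi⟩ := block_nonempty hPdisj hPne hB
  exact disjoint_left.1 (disjoint_block hPdisj hPne hB hB' hne) hi (h ▸ hi)

lemma pairwiseDisjoint_image_block :
    ((P.image (block P) : Finset _) : Set (Finset (Fin n))).PairwiseDisjoint id := by
  rw [coe_image, (block_injOn hPdisj hPne).pairwiseDisjoint_image]
  exact fun B hB B' hB' hne => disjoint_block hPdisj hPne hB hB' hne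

end Disjoint

end MonotonePartition

open MonotonePartition in
theorem stmt_0_general (n : ℕ) (s : Fin n → ℝ≥0) (hmono : Monotone s)
    (P : Finset (Finset (Fin n)))
    (hPne : ∀ B ∈ P, B.Nonempty)
    (hPdisj : (P : Set (Finset (Fin n))).PairwiseDisjoint id)
    (hPcover : ∀ i : Fin n, ∃ B ∈ P, i ∈ B) :
    ∃ Q : Finset (Finset (Fin n)),
      (∀ B ∈ Q, B.Nonempty) ∧
      (Q : Set (Finset (Fin n))).PairwiseDisjoint id ∧
      (∀ i : Fin n, ∃ B ∈ Q, i ∈ B) ∧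
      (∀ B ∈ Q, ∀ i j k : Fin n, i ∈ B → k ∈ B → i ≤ j → j ≤ k → j ∈ B) ∧
      P.val.map Finset.card = Q.val.map Finset.card ∧
      ∑ B ∈ Q, (B.card : ℝ≥0) * B.sup s ≤ ∑ B ∈ P, (B.card : ℝ≥0) * B.sup s := by
  have hinj := block_injOn hPdisj hPne
  have hcard : ∀ B ∈ P, #(block P B) = #B := fun B hB => card_block hPdisj hB (hPne B hB)
  refine ⟨P.image (block P), forall_mem_image.2 fun B hB => block_nonempty hPdisj hPne hB,
    pairwiseDisjoint_image_block hPdisj hPne, ?_, ?_, ?_, ?_⟩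
  · refine exists_mem_of_pairwiseDisjoint_of_sum_card (pairwiseDisjoint_image_block hPdisj hPne) ?_
    rw [sum_image hinj, sum_congr rfl hcard,
      sum_card_eq_of_pairwiseDisjoint_of_cover hPdisj hPcover]
  · simp only [forall_mem_image, mem_block, Fin.le_def]
    intro _ _ _ _ _ hi hk _ _
    omega
  · rw [image_val_of_injOn hinj, Multiset.map_map]
    exact (Multiset.map_congr rfl fun B hB => hcard B hB).symm
  · rw [sum_image hinj]
    refine sum_le_sum fun B hB => ?_
    rw [hcard B hB]
    exact mul_le_mul_right (sup_block_le hPdisj hmono (hPne B hB)) _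

/-- for any partition of the index set into blocks with cost
    (block size) × (max of s over block), there is a monotone (order-respecting,
    contiguous) partition with the same multiset of block sizes and no larger cost. -/
theorem stmt_0 (n : ℕ) (s : Fin n → ℝ≥0) (hmono : Monotone s) (hpos : ∀ i, 0 < s i)
    (f : Fin n → ℝ≥0) (hf : ∀ i, s i ≤ f i)
    (P : Finset (Finset (Fin n)))
    (hPne : ∀ B ∈ P, B.Nonempty)
    (hPdisj : (P : Set (Finset (Fin n))).PairwiseDisjoint id)
    (hPcover : ∀ i : Fin n, ∃ B ∈ P, i ∈ B) :
    ∃ Q : Finset (Finset (Fin n)),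
      (∀ B ∈ Q, B.Nonempty) ∧
      (Q : Set (Finset (Fin n))).PairwiseDisjoint id ∧
      (∀ i : Fin n, ∃ B ∈ Q, i ∈ B) ∧
      (∀ B ∈ Q, ∀ i j k : Fin n, i ∈ B → k ∈ B → i ≤ j → j ≤ k → j ∈ B) ∧
      P.val.map Finset.card = Q.val.map Finset.card ∧
      ∑ B ∈ Q, (B.card : ℝ≥0) * B.sup s ≤ ∑ B ∈ P, (B.card : ℝ≥0) * B.sup s :=
  stmt_0_general n s hmono P hPne hPdisj hPcover
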